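/- Let F be a self-conjugate subfield of ℂ and f ∈ F[z,z⁻¹]. Let ⟦f⟧_F denote the set of all g ∈ F[z,z⁻¹] that are trivially equicorrelational to f. Then ⟦f⟧_F is self-conjugate and ⟦f⟧_F = [f]_F ∪ [f̄]_F. If f is a generalized palindrome, then every element of ⟦f⟧_F is a generalized palindrome and ⟦f⟧_F = [f]_F = [f̄]_F. If f is not a generalized palindrome, then no element of ⟦f⟧_F is a generalized palindrome, and ⟦f⟧_F is the union of the two disjoint, non-self-conjugate F[z,z⁻¹]-associate classes [f]_F and [f̄]_F, which are conjugates of each other. -/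

import Mathlib

open LaurentPolynomial
open scoped Classical

/-- The length of a Laurent polynomial: 1 plus the difference between the maximal and
minimal exponents occurring with nonzero coefficient; the length of 0 is 0. -/
noncomputable def len {F : Type*} [Field F] (f : LaurentPolynomial F) : ℤ :=
  if h : f = 0 then 0
  else f.coeff.support.max'
      (Finsupp.support_nonempty_iff.mpr (fun h' => h (AddMonoidAlgebra.coeff_injective h')))
     - f.coeff.support.min'
      (Finsupp.support_nonempty_iff.mpr (fun h' => h (AddMonoidAlgebra.coeff_injective h'))) + 1

/-- Substitution `f(z) ↦ f(z^m)`: the image of `f` under the ring homomorphism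
sending `z` to `z^m`. -/
noncomputable def subst {F : Type*} [Field F] (m : ℤ) (f : LaurentPolynomial F) :
    LaurentPolynomial F :=
  AddMonoidAlgebra.mapDomainRingHom F (AddMonoidHom.mulLeft m) f

/-- The subring `F[z,z⁻¹]` of `E[z,z⁻¹]` consisting of Laurent polynomials all of whose
coefficients lie in the subfield `F` of `E`. -/
noncomputable def LRing {E : Type*} [Field E] (F : Subfield E) :
    Subring (LaurentPolynomial E) where
  carrier := {f : LaurentPolynomial E | ∀ n : ℤ, f.coeff n ∈ F}
  zero_mem' := fun n => F.zero_mem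
  one_mem' := by
    intro n
    rw [AddMonoidAlgebra.one_def, AddMonoidAlgebra.coeff_single, Finsupp.single_apply]
    split_ifs
    · exact F.one_mem
    · exact F.zero_mem
  add_mem' := by
    intro f g hf hg n
    rw [AddMonoidAlgebra.coeff_add, Finsupp.add_apply]
    exact add_mem (hf n) (hg n)
  neg_mem' := by
    intro f hf n
    rw [AddMonoidAlgebra.coeff_neg, Finsupp.neg_apply]
    exact neg_mem (hf n)
  mul_mem' := by
    intro f g hf hg n
    rw [AddMonoidAlgebra.mul_apply]
    refine sum_mem fun a ha => sum_mem fun b hb => ?_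
    dsimp only
    split_ifs
    · exact mul_mem (hf a) (hg b)
    · exact zero_mem F

/-- The conjugate of `f(z) = Σ f_j z^j`, namely `f̄(z) = Σ conj(f_j) z^{-j}`. -/
noncomputable def lconj (f : LaurentPolynomial ℂ) : LaurentPolynomial ℂ :=
  AddMonoidAlgebra.ofCoeff
    (Finsupp.equivMapDomain (Equiv.neg ℤ) (Finsupp.mapRange (starRingEnd ℂ) (map_zero _) f.coeff))

/-- `f` and `g` are equicorrelational: `f·f̄ = c·g·ḡ` for some positive real `c`. -/
def Equicorrelational (f g : LaurentPolynomial ℂ) : Prop :=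
  ∃ c : ℝ, 0 < c ∧ f * lconj f = C (c : ℂ) * (g * lconj g)

/-- `f` and `g` are trivially equicorrelational: `g` is a `ℂ[z,z⁻¹]`-associate of `f`
or of `f̄`. -/
def TrivEquicorrelational (f g : LaurentPolynomial ℂ) : Prop :=
  Associated g f ∨ Associated g (lconj f)

/-- A generalized palindrome: `f̄` is a `ℂ[z,z⁻¹]`-associate of `f`. -/
def GenPalindrome (f : LaurentPolynomial ℂ) : Prop :=
  Associated (lconj f) f

/-- `g` is an `F[z,z⁻¹]`-associate of `f`: `g = u·f` for some unit `u` of the subring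
`F[z,z⁻¹]` of `ℂ[z,z⁻¹]`. -/
def FAssoc (F : Subfield ℂ) (g f : LaurentPolynomial ℂ) : Prop :=
  ∃ u : (LRing F)ˣ, g = ((u : LRing F) : LaurentPolynomial ℂ) * f

/-- The `F[z,z⁻¹]`-associate class of `f`. -/
def facl (F : Subfield ℂ) (f : LaurentPolynomial ℂ) : Set (LaurentPolynomial ℂ) :=
  {g | FAssoc F g f}

/-- The `F`-trivial equicorrelationality class of `f`: all elements of `F[z,z⁻¹]`
that are trivially equicorrelational to `f`. -/
def fte (F : Subfield ℂ) (f : LaurentPolynomial ℂ) : Set (LaurentPolynomial ℂ) :=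
  {g | g ∈ LRing F ∧ TrivEquicorrelational f g}

/-- A `k`-ary sequence: a Laurent polynomial whose support is a segment of consecutive
integers and whose nonzero coefficients are complex `k`-th roots of unity. -/
def IsKary (k : ℕ) (f : LaurentPolynomial ℂ) : Prop :=
  (∀ i j l : ℤ, i ≤ j → j ≤ l → f.coeff i ≠ 0 → f.coeff l ≠ 0 → f.coeff j ≠ 0) ∧
  ∀ n : ℤ, f.coeff n ≠ 0 → (f.coeff n) ^ k = 1

/-- A binary sequence: a Laurent polynomial whose support is a segment of consecutive
integers and whose nonzero coefficients all lie in `{1, -1}`. -/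
def IsBinary (f : LaurentPolynomial ℂ) : Prop :=
  (∀ i j l : ℤ, i ≤ j → j ≤ l → f.coeff i ≠ 0 → f.coeff l ≠ 0 → f.coeff j ≠ 0) ∧
  ∀ n : ℤ, f.coeff n ≠ 0 → f.coeff n = 1 ∨ f.coeff n = -1

/-!
The units of `ℂ[z,z⁻¹]` are the monomials `c zⁿ` with `c ≠ 0`. If `f ≠ 0` and `g = c zⁿ f` both lie
in `F[z,z⁻¹]`, then `c` is a quotient of coefficients of `g` and `f`, so it lies in `F` and `c zⁿ`
is a unit of `F[z,z⁻¹]`. Hence `[f]_F` consists of the elements of `F[z,z⁻¹]` associated with `f`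
in `ℂ[z,z⁻¹]`, and since conjugation is an involutive ring endomorphism of `ℂ[z,z⁻¹]` preserving
`F[z,z⁻¹]`, every claim reduces to elementary properties of the associate relation.
-/

namespace LaurentPolynomial

theorem exists_C_mul_T_of_isUnit {R : Type*} [CommRing R] [IsDomain R] {u : R[T;T⁻¹]}
    (hu : IsUnit u) : ∃ (c : R) (n : ℤ), IsUnit c ∧ u = C c * T n := by
  obtain ⟨v, huv⟩ := hu.exists_right_inv
  obtain ⟨n, p, hp⟩ := exists_T_pow u
  obtain ⟨m, q, hq⟩ := exists_T_pow v
  have hpq : p * q = Polynomial.X ^ (n + m) := by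
    apply Polynomial.toLaurent_injective
    rw [map_mul, hp, hq, Polynomial.toLaurent_X_pow, mul_mul_mul_comm, huv, one_mul, ← T_add,
      Nat.cast_add]
  obtain ⟨i, -, hpX⟩ := (dvd_prime_pow Polynomial.prime_X _).mp (Dvd.intro q hpq)
  obtain ⟨w, hw⟩ := hpX.symm
  obtain ⟨r, hr, hrw⟩ := Polynomial.isUnit_iff.mp w.isUnit
  refine ⟨r, i - n, hr, ?_⟩
  calc u = Polynomial.toLaurent p * T (-n) := by
        rw [hp, mul_T_assoc, add_neg_cancel, T_zero, mul_one]
    _ = C r * T (i - n) := by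
      rw [← hw, ← hrw, map_mul, Polynomial.toLaurent_C, Polynomial.toLaurent_X_pow, mul_comm,
        ← mul_assoc, ← T_add, sub_eq_add_neg, add_comm]
      exact (commute_T _ _).eq

end LaurentPolynomial

theorem coeff_lconj (f : LaurentPolynomial ℂ) (n : ℤ) :
    (lconj f).coeff n = starRingEnd ℂ (f.coeff (-n)) := rfl

theorem lconj_involutive : Function.Involutive lconj := fun f => by
  ext n
  simp [coeff_lconj]

noncomputable def lconjRingHom : LaurentPolynomial ℂ →+* LaurentPolynomial ℂ :=
  invert.toRingHom.comp (AddMonoidAlgebra.mapRingHom ℤ (starRingEnd ℂ))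

theorem lconjRingHom_apply (f : LaurentPolynomial ℂ) : lconjRingHom f = lconj f := by
  ext n
  simp [lconjRingHom, coeff_lconj]

theorem Associated.lconj {f g : LaurentPolynomial ℂ} (h : Associated g f) :
    Associated (lconj g) (lconj f) := by
  simpa only [lconjRingHom_apply] using h.map lconjRingHom

theorem associated_lconj_lconj_iff {f g : LaurentPolynomial ℂ} :
    Associated (lconj g) (lconj f) ↔ Associated g f :=
  ⟨fun h => by simpa only [lconj_involutive _] using h.lconj, Associated.lconj⟩

theorem genPalindrome_lconj_iff {f : LaurentPolynomial ℂ} :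
    GenPalindrome (lconj f) ↔ GenPalindrome f := by
  rw [GenPalindrome, lconj_involutive f, Associated.comm, GenPalindrome]

theorem Associated.genPalindrome_iff {f g : LaurentPolynomial ℂ} (h : Associated g f) :
    GenPalindrome g ↔ GenPalindrome f :=
  ⟨fun hg => (h.lconj.symm.trans hg).trans h, fun hf => (h.lconj.trans hf).trans h.symm⟩

theorem TrivEquicorrelational.genPalindrome_iff {f g : LaurentPolynomial ℂ}
    (h : TrivEquicorrelational f g) : GenPalindrome g ↔ GenPalindrome f := by
  rcases h with h | h
  · exact h.genPalindrome_iff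
  · exact h.genPalindrome_iff.trans genPalindrome_lconj_iff

section LRing

variable {F : Subfield ℂ}

theorem lconj_mem_LRing_iff (hF : ∀ x ∈ F, starRingEnd ℂ x ∈ F) {f : LaurentPolynomial ℂ} :
    lconj f ∈ LRing F ↔ f ∈ LRing F := by
  have key : ∀ {g : LaurentPolynomial ℂ}, g ∈ LRing F → lconj g ∈ LRing F :=
    fun hg n => hF _ (hg (-n))
  exact ⟨fun h => lconj_involutive f ▸ key h, key⟩

theorem C_mul_T_mem_LRing {c : ℂ} (hc : c ∈ F) (n : ℤ) : C c * T n ∈ LRing F := by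
  intro m
  rw [← single_eq_C_mul_T, AddMonoidAlgebra.coeff_single, Finsupp.single_apply]
  split_ifs
  exacts [hc, F.zero_mem]

theorem isUnit_C_mul_T_LRing {c : ℂ} (hc : c ∈ F) (hc0 : c ≠ 0) (n : ℤ) :
    IsUnit (⟨C c * T n, C_mul_T_mem_LRing hc n⟩ : LRing F) := by
  refine IsUnit.of_mul_eq_one ⟨C c⁻¹ * T (-n), C_mul_T_mem_LRing (F.inv_mem hc) (-n)⟩ ?_
  apply Subtype.ext
  change C c * T n * (C c⁻¹ * T (-n)) = 1
  rw [mul_mul_mul_comm, ← map_mul, mul_inv_cancel₀ hc0, map_one, one_mul, ← T_add,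
    add_neg_cancel, T_zero]

theorem associated_of_mem_facl {f g : LaurentPolynomial ℂ} (h : g ∈ facl F f) :
    Associated g f := by
  obtain ⟨u, rfl⟩ := h
  exact Associated.symm ⟨(u.isUnit.map (LRing F).subtype).unit, mul_comm _ _⟩

theorem mem_facl_iff {f g : LaurentPolynomial ℂ} (hf : f ∈ LRing F) :
    g ∈ facl F f ↔ g ∈ LRing F ∧ Associated g f := by
  refine ⟨fun h => ?_, fun ⟨hg, hgf⟩ => ?_⟩
  · exact ⟨h.elim fun u hu => hu ▸ mul_mem (u : LRing F).2 hf, associated_of_mem_facl h⟩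
  by_cases hf0 : f = 0
  · subst hf0
    rw [associated_zero_iff_eq_zero] at hgf
    exact ⟨1, by rw [hgf, mul_zero]⟩
  obtain ⟨w, hw⟩ := hgf.symm
  obtain ⟨c, n, hc, hcn⟩ := exists_C_mul_T_of_isUnit w.isUnit
  have hgf : g = C c * T n * f := by rw [← hw, hcn, mul_comm]
  obtain ⟨j, hj⟩ : ∃ j, f.coeff j ≠ 0 := by
    by_contra! h
    exact hf0 (AddMonoidAlgebra.coeff_injective (Finsupp.ext h))
  have hcoeff : g.coeff (n + j) = c * f.coeff j := by
    rw [hgf, ← single_eq_C_mul_T, AddMonoidAlgebra.coeff_single_mul_apply, neg_add_cancel_left]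
  have hcF : c ∈ F := by
    rw [← mul_div_cancel_right₀ c hj, ← hcoeff]
    exact F.div_mem (hg _) (hf _)
  exact ⟨(isUnit_C_mul_T_LRing hcF hc.ne_zero n).unit, hgf⟩

theorem self_mem_facl (f : LaurentPolynomial ℂ) : f ∈ facl F f :=
  ⟨1, (one_mul f).symm⟩

theorem disjoint_facl_lconj {f : LaurentPolynomial ℂ} (hp : ¬ GenPalindrome f) :
    Disjoint (facl F f) (facl F (lconj f)) :=
  Set.disjoint_left.mpr fun _ h h' =>
    hp ((associated_of_mem_facl h').symm.trans (associated_of_mem_facl h))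

variable (hF : ∀ x ∈ F, starRingEnd ℂ x ∈ F) {f : LaurentPolynomial ℂ} (hf : f ∈ LRing F)
include hF hf

theorem fte_eq_union : fte F f = facl F f ∪ facl F (lconj f) := by
  ext g
  simp only [fte, TrivEquicorrelational, Set.mem_ofPred_eq, Set.mem_union, mem_facl_iff hf,
    mem_facl_iff ((lconj_mem_LRing_iff hF).mpr hf), and_or_left]

theorem image_lconj_facl : lconj '' facl F f = facl F (lconj f) := by
  ext g
  rw [lconj_involutive.image_eq_preimage_symm, Set.mem_preimage, mem_facl_iff hf,
    mem_facl_iff ((lconj_mem_LRing_iff hF).mpr hf), lconj_mem_LRing_iff hF,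
    ← associated_lconj_lconj_iff, lconj_involutive g]

theorem image_lconj_fte : lconj '' fte F f = fte F f := by
  rw [fte_eq_union hF hf, Set.image_union, image_lconj_facl hF hf,
    image_lconj_facl hF ((lconj_mem_LRing_iff hF).mpr hf), lconj_involutive f, Set.union_comm]

theorem facl_lconj_eq_facl_iff : facl F (lconj f) = facl F f ↔ GenPalindrome f := by
  refine ⟨fun h => associated_of_mem_facl (h ▸ self_mem_facl (lconj f)), fun hp => ?_⟩
  ext g
  rw [mem_facl_iff hf, mem_facl_iff ((lconj_mem_LRing_iff hF).mpr hf)]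
  exact and_congr_right fun _ => ⟨fun h => h.trans hp, fun h => h.trans hp.symm⟩

end LRing

theorem stmt10 (F : Subfield ℂ) (hF : ∀ x ∈ F, (starRingEnd ℂ) x ∈ F)
    (f : LaurentPolynomial ℂ) (hf : f ∈ LRing F) :
    lconj '' fte F f = fte F f ∧
    fte F f = facl F f ∪ facl F (lconj f) ∧
    (GenPalindrome f →
      (∀ g ∈ fte F f, GenPalindrome g) ∧
      fte F f = facl F f ∧ facl F f = facl F (lconj f)) ∧
    (¬ GenPalindrome f →
      (∀ g ∈ fte F f, ¬ GenPalindrome g) ∧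
      Disjoint (facl F f) (facl F (lconj f)) ∧
      lconj '' facl F f ≠ facl F f ∧
      lconj '' facl F (lconj f) ≠ facl F (lconj f) ∧
      lconj '' facl F f = facl F (lconj f)) := by
  have hf' : lconj f ∈ LRing F := (lconj_mem_LRing_iff hF).mpr hf
  have hpal : ∀ g ∈ fte F f, GenPalindrome g ↔ GenPalindrome f :=
    fun g hg => hg.2.genPalindrome_iff
  refine ⟨image_lconj_fte hF hf, fte_eq_union hF hf, fun hp => ?_, fun hp => ?_⟩
  · have hclass := (facl_lconj_eq_facl_iff hF hf).mpr hp
    refine ⟨fun g hg => (hpal g hg).mpr hp, ?_, hclass.symm⟩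
    rw [fte_eq_union hF hf, hclass, Set.union_self]
  · have hclass := mt (facl_lconj_eq_facl_iff hF hf).mp hp
    refine ⟨fun g hg => mt (hpal g hg).mp hp, disjoint_facl_lconj hp, ?_, ?_,
      image_lconj_facl hF hf⟩
    · rwa [image_lconj_facl hF hf]
    · rw [image_lconj_facl hF hf', lconj_involutive f]
      exact Ne.symm hclass
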